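/- Let 𝔪_t = Σ_{i=0}^N t^i m_i be an order-N deformation of a hom-Lie-Rinehart structure 𝔪. The obstruction cochain Θ := −(1/2) Σ_{i+j=N+1, i,j>0} [m_i, m_j] is a 3-cocycle in the deformation complex: δ(Θ) = 0. -/

import Mathlib

open scoped BigOperators

section Framework

variable (R : Type*) [CommRing R] (A : Type*) [CommRing A] [Algebra R A]
variable (M : Type*) [AddCommGroup M] [Module R M] [Module A M] [IsScalarTower R A M]

/-- A `(φ,β)`-multiderivation of degree `n` of the `A`-module `M`, with symbol `σ`. -/
structure IsMultiDer (φ : A →ₐ[R] A) (β : M → M) (n : ℕ)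
    (D : (Fin (n + 1) → M) → M) (σ : (Fin n → M) → A → A) : Prop where
  D_add : ∀ (x : Fin (n + 1) → M) (i : Fin (n + 1)) (u v : M),
    D (Function.update x i (u + v)) = D (Function.update x i u) + D (Function.update x i v)
  D_smul : ∀ (x : Fin (n + 1) → M) (i : Fin (n + 1)) (r : R) (u : M),
    D (Function.update x i (r • u)) = r • D (Function.update x i u)
  D_alt : ∀ (x : Fin (n + 1) → M) (i j : Fin (n + 1)), i ≠ j → x i = x j → D x = 0
  σ_add : ∀ (x : Fin n → M) (i : Fin n) (u v : M),
    σ (Function.update x i (u + v)) = σ (Function.update x i u) + σ (Function.update x i v)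
  σ_smul : ∀ (x : Fin n → M) (i : Fin n) (r : R) (u : M),
    σ (Function.update x i (r • u)) = r • σ (Function.update x i u)
  σ_alt : ∀ (x : Fin n → M) (i j : Fin n), i ≠ j → x i = x j → σ x = 0
  σ_linear : ∀ x : Fin n → M, IsLinearMap R (σ x)
  σ_der : ∀ (x : Fin n → M) (a b : A),
    σ x (a * b) = (⇑φ)^[n] a * σ x b + (⇑φ)^[n] b * σ x a
  D_beta : ∀ x : Fin (n + 1) → M, D (fun i => β (x i)) = β (D x)
  σ_beta : ∀ (x : Fin n → M) (a : A), σ (fun i => β (x i)) (φ a) = φ (σ x a)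
  σ_A : ∀ (x : Fin n → M) (i : Fin n) (a : A),
    σ (Function.update x i (a • x i)) = fun b => (⇑φ)^[n] a * σ x b
  D_leibniz : ∀ (x : Fin (n + 1) → M) (a : A),
    D (Function.update x (Fin.last n) (a • x (Fin.last n)))
      = (⇑φ)^[n] a • D x + σ (fun i : Fin n => x i.castSucc) a • (β^[n] (x (Fin.last n)))

variable {M}

/-- `(q+1,p)`-shuffles: permutations strictly increasing on the first `k` positions
and on the remaining ones. -/
def IsShuffle (k : ℕ) {n : ℕ} (τ : Equiv.Perm (Fin n)) : Prop :=
  (∀ i j : Fin n, i < j → (j : ℕ) < k → τ i < τ j) ∧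
  (∀ i j : Fin n, i < j → k ≤ (i : ℕ) → τ i < τ j)

instance (k n : ℕ) : DecidablePred (fun τ : Equiv.Perm (Fin n) => IsShuffle k τ) := fun τ =>
  inferInstanceAs (Decidable (_ ∧ _))

/-- Shuffle composition `D₁ ∘ D₂` of multiderivations of degrees `p` and `q`. -/
def compFun (β : M → M) (p q : ℕ) (D1 : (Fin (p + 1) → M) → M) (D2 : (Fin (q + 1) → M) → M)
    (x : Fin (p + q + 1) → M) : M :=
  ∑ τ ∈ Finset.univ.filter (fun τ : Equiv.Perm (Fin (p + q + 1)) => IsShuffle (q + 1) τ),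
    (Equiv.Perm.sign τ : ℤ) •
      D1 (Fin.cons (D2 (fun i : Fin (q + 1) => x (τ (Fin.castLE (by omega) i))))
        (fun j : Fin p => β^[q] (x (τ (Fin.cast (by omega) (Fin.natAdd (q + 1) j))))))

/-- The graded Lie bracket `[D₁,D₂] = (-1)^{pq} D₁∘D₂ - D₂∘D₁`. -/
def bracketFun (β : M → M) (p q : ℕ) (D1 : (Fin (p + 1) → M) → M)
    (D2 : (Fin (q + 1) → M) → M) (x : Fin (p + q + 1) → M) : M :=
  ((-1 : ℤ)) ^ (p * q) • compFun β p q D1 D2 x -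
    compFun β q p D2 D1 (fun i => x (Fin.cast (by omega) i))

variable {A}

/-- The operation `σ₁ ⊙ D₂` on symbols. -/
def odotFun (φ : A → A) (β : M → M) :
    (p : ℕ) → (q : ℕ) → ((Fin p → M) → A → A) → ((Fin (q + 1) → M) → M) →
      (Fin (p + q) → M) → A → A
  | 0, _, _, _, _, _ => 0
  | (p' + 1), q, σ1, D2, x, a =>
    ∑ τ ∈ Finset.univ.filter (fun τ : Equiv.Perm (Fin (p' + 1 + q)) => IsShuffle (q + 1) τ),
      (Equiv.Perm.sign τ : ℤ) •
        σ1 (Fin.cons (D2 (fun i : Fin (q + 1) => x (τ (Fin.castLE (by omega) i))))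
            (fun j : Fin p' => β^[q] (x (τ (Fin.cast (by omega) (Fin.natAdd (q + 1) j))))))
          (φ^[q] a)

/-- The bracket `{σ₁, σ₂}` of symbols. -/
def symBrFun (β : M → M) (p q : ℕ) (σ1 : (Fin p → M) → A → A) (σ2 : (Fin q → M) → A → A)
    (x : Fin (p + q) → M) (a : A) : A :=
  ∑ τ ∈ Finset.univ.filter (fun τ : Equiv.Perm (Fin (p + q)) => IsShuffle p τ),
    (Equiv.Perm.sign τ : ℤ) •
      (σ1 (fun i : Fin p => β^[q] (x (τ (Fin.castLE (by omega) i))))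
          (σ2 (fun j : Fin q => x (τ (Fin.cast (by omega) (Fin.natAdd p j)))) a)
        - σ2 (fun j : Fin q => β^[p] (x (τ (Fin.cast (by omega) (Fin.natAdd p j)))))
          (σ1 (fun i : Fin p => x (τ (Fin.castLE (by omega) i))) a))

end Framework

/-!
Write `∘` for the shuffle composition `compFun`. The hom-Jacobiator of `mᵢ, mⱼ` is
`-(mᵢ ∘ mⱼ)`, so `δΘ = Σ_{i+j=N+1, i,j>0} ((mᵢ ∘ mⱼ) ∘ m₀ - m₀ ∘ (mᵢ ∘ mⱼ))`.
The associator `(mₚ ∘ m_q) ∘ m_r - mₚ ∘ (m_q ∘ m_r)` is antisymmetric in `q, r`, hence its sum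
over all `p + q + r = N + 1` vanishes. In the sum of `(mₚ ∘ m_q) ∘ m_r` over these triples the
deformation equations `Σ_{p+q=n} mₚ ∘ m_q = 0` (`n ≤ N`) kill every group with `r > 0`, leaving
`Σ_{p+q=N+1} (mₚ ∘ m_q) ∘ m₀`; likewise the sum of `mₚ ∘ (m_q ∘ m_r)` reduces to
`Σ_{q+r=N+1} m₀ ∘ (m_q ∘ m_r)`. The two agree, and their boundary terms (an index equal to
`N + 1`) cancel by `m₀ ∘ m₀ = 0` and the antisymmetry of the associator, leaving `δΘ = 0`.
-/

open Finset Equiv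

namespace Finset.Nat

variable {G : Type*} [AddCommGroup G]

theorem sum_antidiagonal_eq_zero_of_swap {f : ℕ × ℕ → G} (hswap : ∀ x, f x.swap = -f x)
    (hdiag : ∀ i, f (i, i) = 0) (n : ℕ) : ∑ x ∈ antidiagonal n, f x = 0 := by
  refine sum_involution (fun x _ => x.swap) (fun x _ => by rw [hswap, add_neg_cancel])
    (fun x _ hx hswapx => hx ?_) (fun x hx => HasAntidiagonal.swap_mem_antidiagonal.mpr hx)
    (fun x _ => x.swap_swap)
  obtain ⟨i, j⟩ := x
  obtain rfl : i = j := congrArg Prod.snd hswapx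
  exact hdiag i

theorem sum_antidiagonal_sum_antidiagonal_snd (f : ℕ → ℕ → ℕ → G) (n : ℕ) :
    ∑ x ∈ antidiagonal n, ∑ y ∈ antidiagonal x.2, f x.1 y.1 y.2 =
      ∑ x ∈ antidiagonal n, ∑ y ∈ antidiagonal x.1, f y.1 y.2 x.2 := by
  rw [sum_sigma', sum_sigma']
  refine sum_nbij' (fun z => ⟨(z.1.1 + z.2.1, z.2.2), (z.1.1, z.2.1)⟩)
    (fun z => ⟨(z.2.1, z.2.2 + z.1.2), (z.2.2, z.1.2)⟩) ?_ ?_ ?_ ?_ ?_ <;>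
    rintro ⟨⟨p, s⟩, ⟨q, r⟩⟩ h <;>
    simp_all only [mem_sigma, HasAntidiagonal.mem_antidiagonal, and_true] <;> omega

theorem sum_antidiagonal_succ_eq_add_sum_Ico (f : ℕ → ℕ → G) (n : ℕ) :
    ∑ x ∈ antidiagonal (n + 1), f x.1 x.2 =
      f 0 (n + 1) + f (n + 1) 0 + ∑ i ∈ Ico 1 (n + 1), f i (n + 1 - i) := by
  rw [sum_antidiagonal_eq_sum_range_succ f, sum_range_succ, range_eq_Ico,
    sum_eq_sum_Ico_succ_bot (Nat.succ_pos n), Nat.sub_self, Nat.sub_zero]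
  abel

end Finset.Nat

theorem sum_Ico_sub_eq_zero_of_associator {G : Type*} [AddCommGroup G]
    (T₁ T₂ A : ℕ → ℕ → ℕ → G) (N : ℕ)
    (hT : ∀ p q r, T₂ p q r = T₁ p q r + A p q r)
    (hA_swap : ∀ p q r, A p r q = -A p q r) (hA_diag : ∀ p q, A p q q = 0)
    (hT₁ : ∀ p, ∀ n ≤ N, ∑ x ∈ antidiagonal n, T₁ p x.1 x.2 = 0)
    (hT₂ : ∀ r, ∀ n ≤ N, ∑ x ∈ antidiagonal n, T₂ x.1 x.2 r = 0) :
    ∑ i ∈ Ico 1 (N + 1), (T₂ i (N + 1 - i) 0 - T₁ 0 i (N + 1 - i)) = 0 := by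
  let S : (ℕ → ℕ → ℕ → G) → G := fun F =>
    ∑ x ∈ antidiagonal (N + 1), ∑ y ∈ antidiagonal x.2, F x.1 y.1 y.2
  have hSA : S A = 0 := sum_eq_zero fun x _ =>
    Nat.sum_antidiagonal_eq_zero_of_swap (fun y => hA_swap _ _ _) (hA_diag _) _
  have hST₁ : S T₁ = ∑ y ∈ antidiagonal (N + 1), T₁ 0 y.1 y.2 := by
    simp only [S, Nat.sum_antidiagonal_succ, add_eq_left]
    exact sum_eq_zero fun x hx => hT₁ _ _ (Finset.HasAntidiagonal.antidiagonal.snd_le hx)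
  have hST₂ : S T₂ = ∑ x ∈ antidiagonal (N + 1), T₂ x.1 x.2 0 := by
    simp only [S]
    rw [Nat.sum_antidiagonal_sum_antidiagonal_snd]
    simp only [Nat.sum_antidiagonal_succ', add_eq_left]
    exact sum_eq_zero fun x hx => hT₂ _ _ (Finset.HasAntidiagonal.antidiagonal.fst_le hx)
  have hS : S T₂ = S T₁ + S A := by simp only [S, hT, sum_add_distrib]
  have h₁ : T₁ (N + 1) 0 0 = 0 := by simpa using hT₁ (N + 1) 0 N.zero_le
  have h₂ : T₁ 0 0 (N + 1) = A 0 (N + 1) 0 := by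
    rw [hA_swap, eq_neg_iff_add_eq_zero, ← hT]
    simpa using hT₂ (N + 1) 0 N.zero_le
  rw [hSA, add_zero, hST₁, hST₂, Nat.sum_antidiagonal_succ_eq_add_sum_Ico (T₂ · · 0),
    Nat.sum_antidiagonal_succ_eq_add_sum_Ico (T₁ 0), hT 0 (N + 1) 0, hT (N + 1) 0 0, h₁,
    hA_diag, h₂, add_zero, add_zero, add_comm (T₁ 0 (N + 1) 0)] at hS
  rw [sum_sub_distrib, sub_eq_zero]
  exact add_left_cancel hS

section ShuffleComposition

variable {M : Type*} [AddCommGroup M] (β : M → M)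

theorem compFun_one_one (D₁ D₂ : (Fin 2 → M) → M) (x : Fin 3 → M) :
    compFun β 1 1 D₁ D₂ x =
      D₁ ![D₂ ![x 0, x 1], β (x 2)] - D₁ ![D₂ ![x 0, x 2], β (x 1)]
        + D₁ ![D₂ ![x 1, x 2], β (x 0)] := by
  have hshuffles : univ.filter (fun τ : Perm (Fin 3) => IsShuffle 2 τ)
      = {1, c[1, 2], c[0, 1, 2]} := by decide
  have h₁ : ⇑(c[1, 2] : Perm (Fin 3)) = ![0, 2, 1] := by decide
  have h₂ : ⇑(c[0, 1, 2] : Perm (Fin 3)) = ![1, 2, 0] := by decide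
  have s₁ : Perm.sign (c[1, 2] : Perm (Fin 3)) = -1 := by decide
  have s₂ : Perm.sign (c[0, 1, 2] : Perm (Fin 3)) = 1 := by decide
  rw [compFun, sum_congr hshuffles fun τ _ =>
    show _ = (Perm.sign τ : ℤ) • D₁ ![D₂ ![x (τ 0), x (τ 1)], β (x (τ 2))] by
      congr 2; ext i; fin_cases i
      · exact congrArg D₂ (by ext j; fin_cases j <;> rfl)
      · rfl]
  rw [sum_insert (by decide), sum_insert (by decide), sum_singleton]
  simp [h₁, h₂, s₁, s₂, sub_eq_add_neg, add_assoc]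

theorem compFun_one_two (D : (Fin 2 → M) → M) (C : (Fin 3 → M) → M) (x : Fin 4 → M) :
    compFun β 1 2 D C x =
      D ![C ![x 0, x 1, x 2], β (β (x 3))] - D ![C ![x 0, x 1, x 3], β (β (x 2))]
        + D ![C ![x 0, x 2, x 3], β (β (x 1))] - D ![C ![x 1, x 2, x 3], β (β (x 0))] := by
  have hshuffles : univ.filter (fun τ : Perm (Fin 4) => IsShuffle 3 τ)
      = {1, c[2, 3], c[1, 2, 3], c[0, 1, 2, 3]} := by decide
  have h₁ : ⇑(c[2, 3] : Perm (Fin 4)) = ![0, 1, 3, 2] := by decide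
  have h₂ : ⇑(c[1, 2, 3] : Perm (Fin 4)) = ![0, 2, 3, 1] := by decide
  have h₃ : ⇑(c[0, 1, 2, 3] : Perm (Fin 4)) = ![1, 2, 3, 0] := by decide
  have s₁ : Perm.sign (c[2, 3] : Perm (Fin 4)) = -1 := by decide
  have s₂ : Perm.sign (c[1, 2, 3] : Perm (Fin 4)) = 1 := by decide
  have s₃ : Perm.sign (c[0, 1, 2, 3] : Perm (Fin 4)) = -1 := by decide
  rw [compFun, sum_congr hshuffles fun τ _ =>
    show _ = (Perm.sign τ : ℤ) • D ![C ![x (τ 0), x (τ 1), x (τ 2)], β (β (x (τ 3)))] by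
      congr 2; ext i; fin_cases i
      · exact congrArg C (by ext j; fin_cases j <;> rfl)
      · rfl]
  rw [sum_insert (by decide), sum_insert (by decide), sum_insert (by decide), sum_singleton]
  simp [h₁, h₂, h₃, s₁, s₂, s₃, sub_eq_add_neg, add_assoc]

theorem compFun_two_one (C : (Fin 3 → M) → M) (D : (Fin 2 → M) → M) (x : Fin 4 → M) :
    compFun β 2 1 C D x =
      C ![D ![x 0, x 1], β (x 2), β (x 3)] - C ![D ![x 0, x 2], β (x 1), β (x 3)]
        + C ![D ![x 0, x 3], β (x 1), β (x 2)] + C ![D ![x 1, x 2], β (x 0), β (x 3)]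
        - C ![D ![x 1, x 3], β (x 0), β (x 2)] + C ![D ![x 2, x 3], β (x 0), β (x 1)] := by
  have hshuffles : univ.filter (fun τ : Perm (Fin 4) => IsShuffle 2 τ)
      = {1, c[1, 2], c[1, 3, 2], c[0, 1, 2], c[0, 1, 3, 2], c[0, 2] * c[1, 3]} := by decide
  have h₁ : ⇑(c[1, 2] : Perm (Fin 4)) = ![0, 2, 1, 3] := by decide
  have h₂ : ⇑(c[1, 3, 2] : Perm (Fin 4)) = ![0, 3, 1, 2] := by decide
  have h₃ : ⇑(c[0, 1, 2] : Perm (Fin 4)) = ![1, 2, 0, 3] := by decide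
  have h₄ : ⇑(c[0, 1, 3, 2] : Perm (Fin 4)) = ![1, 3, 0, 2] := by decide
  have h₅ : ⇑(c[0, 2] * c[1, 3] : Perm (Fin 4)) = ![2, 3, 0, 1] := by decide
  have s₁ : Perm.sign (c[1, 2] : Perm (Fin 4)) = -1 := by decide
  have s₂ : Perm.sign (c[1, 3, 2] : Perm (Fin 4)) = 1 := by decide
  have s₃ : Perm.sign (c[0, 1, 2] : Perm (Fin 4)) = 1 := by decide
  have s₄ : Perm.sign (c[0, 1, 3, 2] : Perm (Fin 4)) = -1 := by decide
  have s₅ : Perm.sign (c[0, 2] * c[1, 3] : Perm (Fin 4)) = 1 := by decide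
  rw [compFun, sum_congr hshuffles fun τ _ =>
    show _ = (Perm.sign τ : ℤ) • C ![D ![x (τ 0), x (τ 1)], β (x (τ 2)), β (x (τ 3))] by
      congr 2; ext i; fin_cases i
      · exact congrArg D (by ext j; fin_cases j <;> rfl)
      all_goals rfl]
  rw [sum_insert (by decide), sum_insert (by decide), sum_insert (by decide),
    sum_insert (by decide), sum_insert (by decide), sum_singleton]
  simp [h₁, h₂, h₃, h₄, h₅, s₁, s₂, s₃, s₄, s₅, sub_eq_add_neg, add_assoc]

theorem bracketFun_one_two (D : (Fin 2 → M) → M) (C : (Fin 3 → M) → M) (x : Fin 4 → M) :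
    bracketFun β 1 2 D C x = compFun β 1 2 D C x - compFun β 2 1 C D x := by
  rw [bracketFun]
  norm_num

end ShuffleComposition

section Linearity

variable {M : Type*} [AddCommGroup M] (β : M → M) {p q : ℕ}

theorem compFun_sum_left {ι : Type*} (s : Finset ι) (D : ι → (Fin (p + 1) → M) → M)
    (D₂ : (Fin (q + 1) → M) → M) (x : Fin (p + q + 1) → M) :
    compFun β p q (fun y => ∑ i ∈ s, D i y) D₂ x = ∑ i ∈ s, compFun β p q (D i) D₂ x := by
  simp only [compFun, smul_sum]
  exact sum_comm

theorem compFun_neg_left (D₁ : (Fin (p + 1) → M) → M) (D₂ : (Fin (q + 1) → M) → M)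
    (x : Fin (p + q + 1) → M) :
    compFun β p q (fun y => -D₁ y) D₂ x = -compFun β p q D₁ D₂ x := by
  simp only [compFun, smul_neg, sum_neg_distrib]

theorem compFun_zero_left (D₂ : (Fin (q + 1) → M) → M) (x : Fin (p + q + 1) → M) :
    compFun β p q 0 D₂ x = 0 := by
  simp [compFun]

variable {D₁ : (Fin (p + 1) → M) → M}
  (hD₁ : ∀ (u v : M) (w : Fin p → M),
    D₁ (Fin.cons (u + v) w) = D₁ (Fin.cons u w) + D₁ (Fin.cons v w))
include hD₁

theorem compFun_sum_right {ι : Type*} (s : Finset ι) (C : ι → (Fin (q + 1) → M) → M)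
    (x : Fin (p + q + 1) → M) :
    compFun β p q D₁ (fun y => ∑ i ∈ s, C i y) x = ∑ i ∈ s, compFun β p q D₁ (C i) x := by
  have hsum (w : Fin p → M) (u : ι → M) :
      D₁ (Fin.cons (∑ i ∈ s, u i) w) = ∑ i ∈ s, D₁ (Fin.cons (u i) w) :=
    map_sum (AddMonoidHom.mk' (fun u => D₁ (Fin.cons u w)) (hD₁ · · w)) u s
  simp only [compFun, hsum, smul_sum]
  exact sum_comm

theorem compFun_neg_right (C : (Fin (q + 1) → M) → M) (x : Fin (p + q + 1) → M) :
    compFun β p q D₁ (fun y => -C y) x = -compFun β p q D₁ C x := by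
  have hneg (w : Fin p → M) (u : M) : D₁ (Fin.cons (-u) w) = -D₁ (Fin.cons u w) :=
    map_neg (AddMonoidHom.mk' (fun u => D₁ (Fin.cons u w)) (hD₁ · · w)) u
  simp only [compFun, hneg, smul_neg, sum_neg_distrib]

theorem compFun_zero_right (x : Fin (p + q + 1) → M) : compFun β p q D₁ 0 x = 0 := by
  have hzero (w : Fin p → M) : D₁ (Fin.cons 0 w) = 0 :=
    map_zero (AddMonoidHom.mk' (fun u => D₁ (Fin.cons u w)) (hD₁ · · w))
  simp [compFun, hzero]

theorem bracketFun_sum_right {ι : Type*} (s : Finset ι) (C : ι → (Fin (q + 1) → M) → M)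
    (x : Fin (p + q + 1) → M) :
    bracketFun β p q D₁ (fun y => ∑ i ∈ s, C i y) x = ∑ i ∈ s, bracketFun β p q D₁ (C i) x := by
  simp only [bracketFun, compFun_sum_right β hD₁, compFun_sum_left, smul_sum, sum_sub_distrib]

theorem bracketFun_neg_right (C : (Fin (q + 1) → M) → M) (x : Fin (p + q + 1) → M) :
    bracketFun β p q D₁ (fun y => -C y) x = -bracketFun β p q D₁ C x := by
  simp only [bracketFun, compFun_neg_right β hD₁, compFun_neg_left, smul_neg, neg_sub_neg,
    neg_sub]

end Linearity

section PreLie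

variable {M : Type*} [AddCommGroup M] (β : M → M) {μ ν ρ : (Fin 2 → M) → M}

def compAssociator (μ ν ρ : (Fin 2 → M) → M) (x : Fin 4 → M) : M :=
  μ ![β (ν ![x 2, x 3]), β (ρ ![x 0, x 1])] - μ ![β (ν ![x 1, x 3]), β (ρ ![x 0, x 2])]
    + μ ![β (ν ![x 1, x 2]), β (ρ ![x 0, x 3])] + μ ![β (ν ![x 0, x 3]), β (ρ ![x 1, x 2])]
    - μ ![β (ν ![x 0, x 2]), β (ρ ![x 1, x 3])] + μ ![β (ν ![x 0, x 1]), β (ρ ![x 2, x 3])]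

theorem compFun_compFun_assoc (hμ : ∀ u v w, μ ![u + v, w] = μ ![u, w] + μ ![v, w])
    (hν : ∀ u v, ν ![β u, β v] = β (ν ![u, v])) (x : Fin 4 → M) :
    compFun β 2 1 (compFun β 1 1 μ ν) ρ x =
      compFun β 1 2 μ (compFun β 1 1 ν ρ) x + compAssociator β μ ν ρ x := by
  have hμ' (a b c w : M) : μ ![a - b + c, w] = μ ![a, w] - μ ![b, w] + μ ![c, w] := by
    let f : M →+ M := AddMonoidHom.mk' (fun u => μ ![u, w]) (hμ · · w)
    exact (f.map_add _ _).trans (congrArg (· + _) (f.map_sub a b))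
  simp only [compFun_two_one, compFun_one_two, compFun_one_one, compAssociator,
    Matrix.cons_val_zero, Matrix.cons_val_one, Matrix.cons_val_two, Matrix.tail_cons,
    Matrix.head_cons, hμ', hν]
  abel

variable (hμ : ∀ u v, μ ![u, v] = -μ ![v, u])
include hμ

theorem compAssociator_swap (x : Fin 4 → M) :
    compAssociator β μ ρ ν x = -compAssociator β μ ν ρ x := by
  simp only [compAssociator]
  rw [hμ (β (ρ ![x 2, x 3])), hμ (β (ρ ![x 1, x 3])), hμ (β (ρ ![x 1, x 2])),
    hμ (β (ρ ![x 0, x 3])), hμ (β (ρ ![x 0, x 2])), hμ (β (ρ ![x 0, x 1]))]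
  abel

theorem compAssociator_self (x : Fin 4 → M) : compAssociator β μ ν ν x = 0 := by
  simp only [compAssociator]
  rw [hμ (β (ν ![x 2, x 3])), hμ (β (ν ![x 1, x 3])), hμ (β (ν ![x 1, x 2]))]
  abel

theorem homJacobi_eq_neg_compFun (hμ_add : ∀ u v w, μ ![u + v, w] = μ ![u, w] + μ ![v, w])
    (hν : ∀ u v, ν ![u, v] = -ν ![v, u]) (y : Fin 3 → M) :
    μ ![β (y 0), ν ![y 1, y 2]] + μ ![β (y 1), ν ![y 2, y 0]] + μ ![β (y 2), ν ![y 0, y 1]] =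
      -compFun β 1 1 μ ν y := by
  have hμ_neg (u w : M) : μ ![-u, w] = -μ ![u, w] :=
    (AddMonoidHom.mk' (fun u => μ ![u, w]) (hμ_add · · w)).map_neg u
  rw [compFun_one_one, hμ (β (y 0)), hμ (β (y 1)), hμ (β (y 2)), hν (y 2), hμ_neg]
  abel

end PreLie

namespace IsMultiDer

variable {R A M : Type*} [CommRing R] [CommRing A] [Algebra R A] [AddCommGroup M] [Module R M]
  [Module A M] {φ : A →ₐ[R] A} {β : M → M}

theorem map_cons_add {n : ℕ} {D : (Fin (n + 1) → M) → M} {σ : (Fin n → M) → A → A}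
    (h : IsMultiDer R A M φ β n D σ) (u v : M) (w : Fin n → M) :
    D (Fin.cons (u + v) w) = D (Fin.cons u w) + D (Fin.cons v w) := by
  simpa only [Fin.update_cons_zero] using h.D_add (Fin.cons u w) 0 u v

variable {D : (Fin 2 → M) → M} {σ : (Fin 1 → M) → A → A} (h : IsMultiDer R A M φ β 1 D σ)
include h

theorem map_add_left (u v w : M) : D ![u + v, w] = D ![u, w] + D ![v, w] :=
  h.map_cons_add u v ![w]

theorem map_add_right (u v w : M) : D ![u, v + w] = D ![u, v] + D ![u, w] := by
  have := h.D_add (Fin.cons u (Fin.cons v ![])) (Fin.succ 0) v w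
  simp only [← Fin.cons_update, Fin.update_cons_zero] at this
  exact this

theorem map_swap (u v : M) : D ![u, v] = -D ![v, u] := by
  have h_self (w : M) : D ![w, w] = 0 := h.D_alt ![w, w] 0 1 (by decide) rfl
  have := h_self (u + v)
  rw [h.map_add_left, h.map_add_right, h.map_add_right, h_self, h_self, zero_add, add_zero] at this
  exact eq_neg_of_add_eq_zero_left this

theorem map_apply_apply (u v : M) : D ![β u, β v] = β (D ![u, v]) :=
  (congrArg D (FinVec.map_eq β ![u, v])).trans (h.D_beta ![u, v])

end IsMultiDer

theorem obstruction_is_three_cocycle_general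
    (R : Type*) [CommRing R] (A : Type*) [CommRing A] [Algebra R A]
    (L : Type*) [AddCommGroup L] [Module R L] [Module A L]
    (φ : A →ₐ[R] A) (α : L → L)
    (N : ℕ) (m : ℕ → (Fin 2 → L) → L) (σs : ℕ → (Fin 1 → L) → A → A)
    (hmd : ∀ i, IsMultiDer R A L φ α 1 (m i) (σs i))
    (hdef : ∀ n ≤ N, ∀ (x y z : L),
      ∑ i ∈ Finset.range (n + 1),
        (m i ![α x, m (n - i) ![y, z]] + m i ![α y, m (n - i) ![z, x]]
          + m i ![α z, m (n - i) ![x, y]]) = 0) :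
    ∀ x : Fin 4 → L,
      bracketFun α 1 2 (m 0)
        (fun y : Fin 3 → L =>
          ∑ i ∈ Finset.Ico 1 (N + 1),
            (m i ![α (y 0), m (N + 1 - i) ![y 1, y 2]]
              + m i ![α (y 1), m (N + 1 - i) ![y 2, y 0]]
              + m i ![α (y 2), m (N + 1 - i) ![y 0, y 1]])) x = 0 := by
  have hJacobi (i j : ℕ) := homJacobi_eq_neg_compFun α (hmd i).map_swap (hmd i).map_add_left
    (hmd j).map_swap
  have hcomp (n : ℕ) (hn : n ≤ N) : (fun y => ∑ x ∈ antidiagonal n,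
      compFun α 1 1 (m x.1) (m x.2) y) = 0 := by
    ext y
    have := hdef n hn (y 0) (y 1) (y 2)
    rw [← Nat.sum_antidiagonal_eq_sum_range_succ (fun i j => m i ![α (y 0), m j ![y 1, y 2]]
      + m i ![α (y 1), m j ![y 2, y 0]] + m i ![α (y 2), m j ![y 0, y 1]])] at this
    simpa only [hJacobi, sum_neg_distrib, neg_eq_zero, Pi.zero_apply] using this
  intro x
  simp only [hJacobi, bracketFun_sum_right α (hmd 0).map_cons_add,
    bracketFun_neg_right α (hmd 0).map_cons_add, bracketFun_one_two, neg_sub]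
  refine sum_Ico_sub_eq_zero_of_associator _ _
    (fun p q r => compAssociator α (m p) (m q) (m r) x) N
    (fun p q r => compFun_compFun_assoc α (hmd p).map_add_left (hmd q).map_apply_apply x)
    (fun p q r => compAssociator_swap α (hmd p).map_swap x)
    (fun p q => compAssociator_self α (hmd p).map_swap x) (fun p n hn => ?_) (fun r n hn => ?_)
  · rw [← compFun_sum_right α (hmd p).map_cons_add, hcomp n hn,
      compFun_zero_right α (hmd p).map_cons_add]
  · rw [← compFun_sum_left, hcomp n hn, compFun_zero_left]

/-- for an order-`N` deformation `𝔪_t = Σ_{i=0}^N tⁱ mᵢ` of a hom-Lie-Rinehart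
structure `𝔪 = m₀`, the obstruction cochain
`Θ(a,b,c) = Σ_{i+j=N+1, i,j>0} (mᵢ(α a, mⱼ(b,c)) + mᵢ(α b, mⱼ(c,a)) + mᵢ(α c, mⱼ(a,b)))`
(`= -(1/2) Σ [mᵢ,mⱼ]`) is a 3-cocycle of the deformation complex: `δ(Θ) = [𝔪, Θ] = 0`. -/
theorem obstruction_is_three_cocycle
    (R : Type*) [CommRing R] (A : Type*) [CommRing A] [Algebra R A]
    (L : Type*) [AddCommGroup L] [Module R L] [Module A L] [IsScalarTower R A L]
    (φ : A →ₐ[R] A) (α : L → L)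
    (N : ℕ) (m : ℕ → (Fin 2 → L) → L) (σs : ℕ → (Fin 1 → L) → A → A)
    (hmd : ∀ i, IsMultiDer R A L φ α 1 (m i) (σs i))
    (hdef : ∀ n ≤ N, ∀ (x y z : L),
      ∑ i ∈ Finset.range (n + 1),
        (m i ![α x, m (n - i) ![y, z]] + m i ![α y, m (n - i) ![z, x]]
          + m i ![α z, m (n - i) ![x, y]]) = 0) :
    ∀ x : Fin 4 → L,
      bracketFun α 1 2 (m 0)
        (fun y : Fin 3 → L =>
          ∑ i ∈ Finset.Ico 1 (N + 1),
            (m i ![α (y 0), m (N + 1 - i) ![y 1, y 2]]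
              + m i ![α (y 1), m (N + 1 - i) ![y 2, y 0]]
              + m i ![α (y 2), m (N + 1 - i) ![y 0, y 1]])) x = 0 :=
  obstruction_is_three_cocycle_general R A L φ α N m σs hmd hdef
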